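/- Let $x_1, x_2$ be i.i.d. with law $S\,\delta_0 + (1-S)\,\mathrm{Unif}(0,1]$ for $S \in [0,1)$. Then for $x \in [-1,0)$, $\mathrm{P}(x_1 - x_2 \le x \mid x_1 \le x_2) = \frac{((1-S)x+1)^2 - S^2}{1+S^2}$, and for $x \in (0,1]$, $\mathrm{P}(x_1 - x_2 \le x \mid x_1 > x_2) = \frac{1 - (1-(1-S)x)^2}{1-S^2}$. -/

import Mathlib

/-!
Independence makes the joint law of `(X1, X2)` the product `μ ⊗ μ` of `μ = mixLaw S`, and
slicing along the first coordinate gives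
`(μ ⊗ μ) s = S · μ(s₀) + (1 - S) ∫_{(0,1]} μ(s_u) du`.
Every slice needed here is an interval whose `μ`-measure is affine in `u` on at most two pieces
of `(0,1]`, so each probability is an elementary integral. For `x < 0` the event
`{X1 - X2 ≤ x}` lies inside `{X1 ≤ X2}`; and `P(X2 < X1) = 1 - P(X1 ≤ X2) = (1 - S²)/2`,
the atom at `(0,0)` carrying mass `S²`.
-/

open MeasureTheory ProbabilityTheory

/-- The sparse-uniform mixture law `S·δ₀ + (1-S)·Unif(0,1]`. -/
noncomputable def mixLaw (S : ℝ) : Measure ℝ :=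
  (ENNReal.ofReal S) • Measure.dirac 0 +
    (ENNReal.ofReal (1 - S)) • (volume.restrict (Set.Ioc (0:ℝ) 1))

open Set

theorem ProbabilityTheory.cond_map {Ω β : Type*} [MeasurableSpace Ω] [MeasurableSpace β]
    {μ : Measure Ω} {f : Ω → β} (hf : Measurable f) {s t : Set β} (hs : MeasurableSet s)
    (ht : MeasurableSet t) : (μ.map f)[t | s] = μ[f ⁻¹' t | f ⁻¹' s] := by
  rw [cond_apply hs, cond_apply (hf hs), Measure.map_apply hf hs,
    Measure.map_apply hf (hs.inter ht), preimage_inter]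

theorem ENNReal.ofReal_mul_add_ofReal_mul {p q a b : ℝ} (hp : 0 ≤ p) (hq : 0 ≤ q) (ha : 0 ≤ a)
    (hb : 0 ≤ b) :
    ENNReal.ofReal p * ENNReal.ofReal a + ENNReal.ofReal q * ENNReal.ofReal b =
      ENNReal.ofReal (p * a + q * b) := by
  rw [← ENNReal.ofReal_mul hp, ← ENNReal.ofReal_mul hq,
    ← ENNReal.ofReal_add (mul_nonneg hp ha) (mul_nonneg hq hb)]

theorem setLIntegral_Ioc_ofReal_affine {a b : ℝ} (c d : ℝ) (hab : a ≤ b)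
    (hf : ∀ u ∈ Ioc a b, 0 ≤ c + d * u) :
    ∫⁻ u in Ioc a b, ENNReal.ofReal (c + d * u) =
      ENNReal.ofReal (c * (b - a) + d * (b ^ 2 - a ^ 2) / 2) := by
  have hcont : Continuous fun u ↦ c + d * u := by fun_prop
  rw [← ofReal_integral_eq_lintegral_ofReal hcont.integrableOn_Ioc
      ((ae_restrict_iff' measurableSet_Ioc).2 (ae_of_all _ hf)),
    ← intervalIntegral.integral_of_le hab,
    intervalIntegral.integral_add intervalIntegrable_const
      (intervalIntegral.intervalIntegrable_id.const_mul d),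
    intervalIntegral.integral_const, intervalIntegral.integral_const_mul, integral_id, smul_eq_mul]
  congr 1; ring

section mixLaw

variable {S : ℝ}

instance sFinite_mixLaw (S : ℝ) : SFinite (mixLaw S) := by
  unfold mixLaw; infer_instance

theorem mixLaw_apply (S : ℝ) {t : Set ℝ} (ht : MeasurableSet t) :
    mixLaw S t = ENNReal.ofReal S * t.indicator 1 0 +
      ENNReal.ofReal (1 - S) * volume (t ∩ Ioc 0 1) := by
  rw [mixLaw, Measure.add_apply, Measure.smul_apply, Measure.smul_apply,
    Measure.dirac_apply' _ ht, Measure.restrict_apply ht, smul_eq_mul, smul_eq_mul]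

theorem lintegral_mixLaw (S : ℝ) {f : ℝ → ENNReal} (hf : Measurable f) :
    ∫⁻ u, f u ∂mixLaw S =
      ENNReal.ofReal S * f 0 + ENNReal.ofReal (1 - S) * ∫⁻ u in Ioc 0 1, f u := by
  rw [mixLaw, lintegral_add_measure, lintegral_smul_measure, lintegral_smul_measure,
    lintegral_dirac' _ hf, smul_eq_mul, smul_eq_mul]

theorem mixLaw_prod_apply (S : ℝ) {s : Set (ℝ × ℝ)} (hs : MeasurableSet s) :
    (mixLaw S).prod (mixLaw S) s =
      ENNReal.ofReal S * mixLaw S (Prod.mk 0 ⁻¹' s) +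
        ENNReal.ofReal (1 - S) * ∫⁻ u in Ioc 0 1, mixLaw S (Prod.mk u ⁻¹' s) := by
  rw [Measure.prod_apply hs, lintegral_mixLaw S (measurable_measure_prodMk_left hs)]

theorem mixLaw_eq_one_of_Icc_subset (hS0 : 0 ≤ S) (hS1 : S ≤ 1) {t : Set ℝ}
    (ht : MeasurableSet t) (h : Icc 0 1 ⊆ t) : mixLaw S t = 1 := by
  rw [mixLaw_apply S ht, indicator_of_mem (h ⟨le_rfl, zero_le_one⟩),
    inter_eq_right.mpr (Ioc_subset_Icc_self.trans h), Real.volume_Ioc, Pi.one_apply, mul_one,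
    sub_zero, ENNReal.ofReal_one, mul_one, ← ENNReal.ofReal_add hS0 (by linarith),
    add_sub_cancel, ENNReal.ofReal_one]

theorem isProbabilityMeasure_mixLaw (hS0 : 0 ≤ S) (hS1 : S ≤ 1) :
    IsProbabilityMeasure (mixLaw S) :=
  ⟨mixLaw_eq_one_of_Icc_subset hS0 hS1 MeasurableSet.univ (subset_univ _)⟩

-- For `c > 1` both sides vanish, `ENNReal.ofReal` being `0` on negative reals.
theorem mixLaw_Ici_of_pos (hS1 : S ≤ 1) {c : ℝ} (hc : 0 < c) :
    mixLaw S (Ici c) = ENNReal.ofReal ((1 - S) * (1 - c)) := by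
  have : Ici c ∩ Ioc 0 1 = Icc c 1 := by
    rw [← Ioi_inter_Iic, ← inter_assoc, inter_eq_left.mpr (Ici_subset_Ioi.mpr hc), Ici_inter_Iic]
  rw [mixLaw_apply S measurableSet_Ici, indicator_of_notMem (by simpa using hc), this,
    Real.volume_Icc, mul_zero, zero_add, ENNReal.ofReal_mul (by linarith)]

theorem mixLaw_Ico_of_nonpos (a : ℝ) {b : ℝ} (hb : b ≤ 0) : mixLaw S (Ico a b) = 0 := by
  have : Ico a b ∩ Ioc 0 1 = ∅ :=
    eq_empty_of_forall_notMem fun v hv ↦ by linarith [hv.1.2, hv.2.1]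
  rw [mixLaw_apply S measurableSet_Ico, indicator_of_notMem (by simp [hb]), this]
  simp

theorem mixLaw_Ico_of_nonpos_of_pos (hS0 : 0 ≤ S) (hS1 : S ≤ 1) {a b : ℝ} (ha : a ≤ 0)
    (hb : 0 < b) (hb1 : b ≤ 1) : mixLaw S (Ico a b) = ENNReal.ofReal (S + (1 - S) * b) := by
  have : Ico a b ∩ Ioc 0 1 = Ioo 0 b := by
    ext v; simp only [mem_inter_iff, mem_Ico, mem_Ioc, mem_Ioo]
    constructor
    · rintro ⟨⟨-, hvb⟩, hv0, -⟩; exact ⟨hv0, hvb⟩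
    · rintro ⟨hv0, hvb⟩; exact ⟨⟨by linarith, hvb⟩, hv0, by linarith⟩
  rw [mixLaw_apply S measurableSet_Ico, indicator_of_mem (show (0 : ℝ) ∈ Ico a b from ⟨ha, hb⟩),
    this, Real.volume_Ioo, Pi.one_apply, mul_one, sub_zero, ENNReal.ofReal_add hS0 (by nlinarith),
    ENNReal.ofReal_mul (by linarith)]

theorem mixLaw_Ico_of_pos (hS1 : S ≤ 1) {a b : ℝ} (ha : 0 < a) (hb1 : b ≤ 1) :
    mixLaw S (Ico a b) = ENNReal.ofReal ((1 - S) * (b - a)) := by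
  have : Ico a b ∩ Ioc 0 1 = Ico a b :=
    inter_eq_left.mpr fun v hv ↦ ⟨ha.trans_le hv.1, hv.2.le.trans hb1⟩
  rw [mixLaw_apply S measurableSet_Ico, indicator_of_notMem (by simp [ha.not_ge]), this,
    Real.volume_Ico, mul_zero, zero_add, ENNReal.ofReal_mul (by linarith)]

theorem mixLaw_prod_le (hS0 : 0 ≤ S) (hS1 : S ≤ 1) :
    (mixLaw S).prod (mixLaw S) {p | p.1 ≤ p.2} = ENNReal.ofReal ((1 + S ^ 2) / 2) := by
  have hint : ∫⁻ u in Ioc 0 1, mixLaw S (Ici u) = ENNReal.ofReal ((1 - S) / 2) := by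
    rw [setLIntegral_congr_fun (g := fun u ↦ ENNReal.ofReal ((1 - S) + -(1 - S) * u))
        measurableSet_Ioc fun u hu ↦ by rw [mixLaw_Ici_of_pos hS1 hu.1]; congr 1; ring,
      setLIntegral_Ioc_ofReal_affine _ _ zero_le_one fun u hu ↦ by nlinarith [hu.2]]
    congr 1; ring
  rw [mixLaw_prod_apply S (measurableSet_le measurable_fst measurable_snd)]
  change _ * mixLaw S (Ici 0) + _ * ∫⁻ u in Ioc 0 1, mixLaw S (Ici u) = _
  rw [hint, mixLaw_eq_one_of_Icc_subset hS0 hS1 measurableSet_Ici Icc_subset_Ici_self,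
    ← ENNReal.ofReal_one,
    ENNReal.ofReal_mul_add_ofReal_mul hS0 (by linarith) zero_le_one (by linarith)]
  congr 1; ring

theorem mixLaw_prod_lt (hS0 : 0 ≤ S) (hS1 : S ≤ 1) :
    (mixLaw S).prod (mixLaw S) {p | p.2 < p.1} = ENNReal.ofReal ((1 - S ^ 2) / 2) := by
  have := isProbabilityMeasure_mixLaw hS0 hS1
  have hcompl : {p : ℝ × ℝ | p.2 < p.1} = {p | p.1 ≤ p.2}ᶜ := by
    ext p; simp
  rw [hcompl, prob_compl_eq_one_sub (measurableSet_le measurable_fst measurable_snd),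
    mixLaw_prod_le hS0 hS1, ← ENNReal.ofReal_one, ← ENNReal.ofReal_sub _ (by positivity)]
  congr 1; ring

theorem mixLaw_prod_sub_le_of_neg (hS0 : 0 ≤ S) (hS1 : S ≤ 1) {x : ℝ} (hx : x ∈ Ico (-1) 0) :
    (mixLaw S).prod (mixLaw S) {p | p.1 - p.2 ≤ x} =
      ENNReal.ofReal ((((1 - S) * x + 1) ^ 2 - S ^ 2) / 2) := by
  obtain ⟨hx1, hx0⟩ := hx
  have hsec : ∀ u : ℝ, Prod.mk u ⁻¹' {p : ℝ × ℝ | p.1 - p.2 ≤ x} = Ici (u - x) := fun u ↦ by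
    ext v; exact sub_le_comm (a := u)
  have hint : ∫⁻ u in Ioc 0 1, mixLaw S (Ici (u - x)) =
      ENNReal.ofReal ((1 - S) * (1 + x) ^ 2 / 2) := by
    rw [setLIntegral_congr_fun (g := fun u ↦ ENNReal.ofReal ((1 - S) * (1 + x) + -(1 - S) * u))
        measurableSet_Ioc fun u hu ↦ by
          rw [mixLaw_Ici_of_pos hS1 (by linarith [hu.1])]; congr 1; ring,
      ← Ioc_union_Ioc_eq_Ioc (b := 1 + x) (by linarith) (by linarith),
      lintegral_union measurableSet_Ioc (Ioc_disjoint_Ioc_of_le le_rfl),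
      setLIntegral_Ioc_ofReal_affine _ _ (by linarith) fun u hu ↦ by nlinarith [hu.2],
      setLIntegral_eq_zero measurableSet_Ioc fun u hu ↦
        ENNReal.ofReal_of_nonpos (by nlinarith [hu.1]), add_zero]
    congr 1; ring
  rw [mixLaw_prod_apply S (measurableSet_le (by fun_prop) measurable_const)]
  simp only [hsec]
  rw [hint, mixLaw_Ici_of_pos hS1 (by linarith),
    ENNReal.ofReal_mul_add_ofReal_mul hS0 (by linarith) (by nlinarith) (by positivity)]
  congr 1; ring

theorem mixLaw_prod_lt_inter_sub_le (hS0 : 0 ≤ S) (hS1 : S ≤ 1) {x : ℝ} (hx : x ∈ Ioc 0 1) :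
    (mixLaw S).prod (mixLaw S) ({p | p.2 < p.1} ∩ {p | p.1 - p.2 ≤ x}) =
      ENNReal.ofReal ((1 - (1 - (1 - S) * x) ^ 2) / 2) := by
  obtain ⟨hx0, hx1⟩ := hx
  have hsec : ∀ u : ℝ,
      Prod.mk u ⁻¹' ({p : ℝ × ℝ | p.2 < p.1} ∩ {p | p.1 - p.2 ≤ x}) = Ico (u - x) u := fun u ↦ by
    ext v; simp only [mem_preimage, mem_inter_iff, mem_ofPred_eq, mem_Ico, sub_le_comm]
    exact and_comm
  have hnear : ∫⁻ u in Ioc 0 x, mixLaw S (Ico (u - x) u) =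
      ENNReal.ofReal (S * x + (1 - S) * x ^ 2 / 2) := by
    rw [setLIntegral_congr_fun measurableSet_Ioc fun u hu ↦
        mixLaw_Ico_of_nonpos_of_pos hS0 hS1 (by linarith [hu.2]) hu.1 (by linarith [hu.2]),
      setLIntegral_Ioc_ofReal_affine _ _ hx0.le fun u hu ↦ by nlinarith [hu.1]]
    congr 1; ring
  have hfar : ∫⁻ u in Ioc x 1, mixLaw S (Ico (u - x) u) =
      ENNReal.ofReal ((1 - S) * x) * ENNReal.ofReal (1 - x) := by
    rw [setLIntegral_congr_fun (g := fun _ ↦ ENNReal.ofReal ((1 - S) * x)) measurableSet_Ioc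
        fun u hu ↦ by rw [mixLaw_Ico_of_pos hS1 (by linarith [hu.1]) hu.2]; congr 1; ring,
      setLIntegral_const, Real.volume_Ioc]
  rw [mixLaw_prod_apply S ((measurableSet_lt measurable_snd measurable_fst).inter
    (measurableSet_le (by fun_prop) measurable_const))]
  simp only [hsec]
  rw [zero_sub, mixLaw_Ico_of_nonpos _ le_rfl, mul_zero, zero_add,
    ← Ioc_union_Ioc_eq_Ioc hx0.le hx1, lintegral_union measurableSet_Ioc
      (Ioc_disjoint_Ioc_of_le le_rfl), hnear, hfar,
    ← ENNReal.ofReal_mul (by nlinarith),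
    ← ENNReal.ofReal_add (by positivity) (mul_nonneg (by nlinarith) (by linarith)),
    ← ENNReal.ofReal_mul (by linarith)]
  congr 1; ring

theorem cond_mixLaw_prod_sub_le_of_neg (hS0 : 0 ≤ S) (hS1 : S ≤ 1) {x : ℝ}
    (hx : x ∈ Ico (-1) 0) :
    ((mixLaw S).prod (mixLaw S))[{p | p.1 - p.2 ≤ x} | {p | p.1 ≤ p.2}] =
      ENNReal.ofReal ((((1 - S) * x + 1) ^ 2 - S ^ 2) / (1 + S ^ 2)) := by
  have hsub : {p : ℝ × ℝ | p.1 - p.2 ≤ x} ⊆ {p | p.1 ≤ p.2} := fun p hp ↦ by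
    simp only [mem_ofPred_eq] at hp ⊢; linarith [hx.2]
  rw [cond_apply (measurableSet_le measurable_fst measurable_snd), inter_eq_right.mpr hsub,
    mixLaw_prod_le hS0 hS1, mixLaw_prod_sub_le_of_neg hS0 hS1 hx, ← ENNReal.div_eq_inv_mul,
    ← ENNReal.ofReal_div_of_pos (by positivity)]
  congr 1
  field_simp

theorem cond_mixLaw_prod_sub_le_of_pos (hS0 : 0 ≤ S) (hS1 : S < 1) {x : ℝ}
    (hx : x ∈ Ioc 0 1) :
    ((mixLaw S).prod (mixLaw S))[{p | p.1 - p.2 ≤ x} | {p | p.2 < p.1}] =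
      ENNReal.ofReal ((1 - (1 - (1 - S) * x) ^ 2) / (1 - S ^ 2)) := by
  rw [cond_apply (measurableSet_lt measurable_snd measurable_fst), mixLaw_prod_lt hS0 hS1.le,
    mixLaw_prod_lt_inter_sub_le hS0 hS1.le hx, ← ENNReal.div_eq_inv_mul,
    ← ENNReal.ofReal_div_of_pos (by nlinarith)]
  have : 1 - S ^ 2 ≠ 0 := by nlinarith
  congr 1
  field_simp

end mixLaw

theorem stmt7 {Ω : Type*} [MeasureSpace Ω] [IsProbabilityMeasure (ℙ : Measure Ω)]
    (S : ℝ) (hS : S ∈ Set.Ico (0:ℝ) 1)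
    (X1 X2 : Ω → ℝ) (hX1 : Measurable X1) (hX2 : Measurable X2)
    (hindep : IndepFun X1 X2)
    (hL1 : Measure.map X1 ℙ = mixLaw S) (hL2 : Measure.map X2 ℙ = mixLaw S) :
    (∀ x ∈ Set.Ico (-1 : ℝ) 0,
      ℙ[{ω | X1 ω - X2 ω ≤ x} | {ω | X1 ω ≤ X2 ω}] =
        ENNReal.ofReal ((((1 - S)*x + 1)^2 - S^2) / (1 + S^2))) ∧
    (∀ x ∈ Set.Ioc (0:ℝ) 1,
      ℙ[{ω | X1 ω - X2 ω ≤ x} | {ω | X2 ω < X1 ω}] =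
        ENNReal.ofReal ((1 - (1 - (1 - S)*x)^2) / (1 - S^2))) := by
  obtain ⟨hS0, hS1⟩ := hS
  have hpair : Measurable fun ω ↦ (X1 ω, X2 ω) := hX1.prodMk hX2
  have hjoint : Measure.map (fun ω ↦ (X1 ω, X2 ω)) ℙ = (mixLaw S).prod (mixLaw S) := by
    rw [(indepFun_iff_map_prod_eq_prod_map_map hX1.aemeasurable hX2.aemeasurable).mp hindep,
      hL1, hL2]
  have hmeas : ∀ x : ℝ, MeasurableSet {p : ℝ × ℝ | p.1 - p.2 ≤ x} := fun x ↦
    measurableSet_le (by fun_prop) measurable_const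
  refine ⟨fun x hx ↦ ?_, fun x hx ↦ ?_⟩
  · rw [← cond_mixLaw_prod_sub_le_of_neg hS0 hS1.le hx, ← hjoint,
      cond_map hpair (measurableSet_le measurable_fst measurable_snd) (hmeas x)]
    rfl
  · rw [← cond_mixLaw_prod_sub_le_of_pos hS0 hS1 hx, ← hjoint,
      cond_map hpair (measurableSet_lt measurable_snd measurable_fst) (hmeas x)]
    rfl
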